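/- arXiv:0802.1279 — 2 statements merged into one kernel-verified Lean document; each statement's English description precedes it below -/
import Mathlib

section
/- Let 2 ≤ l ≤ n−1 and let J ⊂ S be the ideal generated by all monomials w of degree d with x_2^d ≥_lex w ≥_lex x_l·x_n^{d-1}. Then for every monomial h of degree d of the form h = x_1·x_{l+1}^{α_{l+1}}···x_n^{α_n} (i.e., h is divisible by x_1 and by no variable among x_2, …, x_l), the colon ideal J : h equals (x_2, …, x_l). -/
open MvPolynomial

/-- Exponent vectors of monomials in `n` variables; index `i` corresponds to the variable
`x_{i+1}`, so that the `toLex` order on exponent vectors is the lexicographic order on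
monomials with `x_1 > x_2 > ⋯ > x_n`. -/
abbrev Mon (n : ℕ) := Fin n →₀ ℕ

/-- The degree of a monomial. -/
def monDeg {n : ℕ} (m : Mon n) : ℕ := ∑ i, m i

/-- The lexsegment `L(u,v)`: monomials of degree `d` with `u ≥_lex w ≥_lex v`. -/
def lexSeg {n : ℕ} (d : ℕ) (u v : Mon n) : Set (Mon n) :=
  {w | monDeg w = d ∧ toLex v ≤ toLex w ∧ toLex w ≤ toLex u}

/-- The monomial ideal generated by a set of monomials. -/
noncomputable def monomialIdeal {n : ℕ} (k : Type*) [Field k] (T : Set (Mon n)) :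
    Ideal (MvPolynomial (Fin n) k) :=
  Ideal.span ((fun m => (monomial m (1 : k) : MvPolynomial (Fin n) k)) '' T)

/-- The order `≺` on monomials of a fixed degree: `w ≺ w'` iff `ν₁(w) < ν₁(w')`, or
`ν₁(w) = ν₁(w')` and `w >_lex w'`. -/
def prec {n : ℕ} [NeZero n] (z w : Mon n) : Prop :=
  z 0 < w 0 ∨ (z 0 = w 0 ∧ toLex w < toLex z)

/-- A set `T` of monomials, totally ordered by a relation `r`, generates an ideal with linear
quotients with respect to `r` if for every `w ∈ T` the colon ideal of the ideal generated by
the earlier monomials `{z ∈ T | r z w}` by `w` is generated by a subset of the variables. -/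
noncomputable def hasLinearQuotientsWrt {n : ℕ} (k : Type*) [Field k] (T : Set (Mon n))
    (r : Mon n → Mon n → Prop) : Prop :=
  ∀ w ∈ T, ∃ V : Set (Fin n),
    Submodule.colon (monomialIdeal k {z ∈ T | r z w})
        (Ideal.span {(monomial w (1 : k) : MvPolynomial (Fin n) k)}) =
      Ideal.span ((fun i => (X i : MvPolynomial (Fin n) k)) '' V)

/-- `max(m)`: the largest index of a variable dividing the monomial `m`. -/
def maxVar {n : ℕ} [NeZero n] (m : Mon n) : Fin n := m.support.max.unbotD 0

/-- The shadow of a set of monomials. -/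
def shad {n : ℕ} (T : Set (Mon n)) : Set (Mon n) :=
  {m | ∃ t ∈ T, ∃ i : Fin n, m = t + Finsupp.single i 1}

/-- A set of monomials is a lexsegment if it is of the form `L(u,v)`. -/
def IsLexSegSet {n : ℕ} (T : Set (Mon n)) : Prop :=
  ∃ (e : ℕ) (u v : Mon n), monDeg u = e ∧ monDeg v = e ∧ toLex v ≤ toLex u ∧ T = lexSeg e u v

/-- A lexsegment is a completely lexsegment if all its iterated shadows are lexsegments. -/
def IsCompletelyLexSeg {n : ℕ} (T : Set (Mon n)) : Prop :=
  ∀ j : ℕ, IsLexSegSet (shad^[j] T)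

/-- `set(w)` for `w ∈ L(u,v)`: the set of `s` with `x_s · w ∈ I_{≺ w}`, where `I_{≺ w}` is the
ideal generated by `{z ∈ L(u,v) | z ≺ w}`. -/
noncomputable def setW {n : ℕ} [NeZero n] (k : Type*) [Field k] (d : ℕ) (u v : Mon n)
    (w : Mon n) : Set (Fin n) :=
  {s | (monomial (w + Finsupp.single s 1) (1 : k) : MvPolynomial (Fin n) k) ∈
    monomialIdeal k {z ∈ lexSeg d u v | prec z w}}

/-- `g` is the value of the decomposition function of `I = (L(u,v))` at the monomial `m`:
`g` is the `≺`-smallest `w' ∈ L(u,v)` such that `m ∈ I_{⪯ w'}`. -/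
noncomputable def isDecompOf {n : ℕ} [NeZero n] (k : Type*) [Field k] (d : ℕ) (u v : Mon n)
    (m : Mon n) (g : Mon n) : Prop :=
  g ∈ lexSeg d u v ∧
  (monomial m (1 : k) : MvPolynomial (Fin n) k) ∈
      monomialIdeal k {z ∈ lexSeg d u v | prec z g ∨ z = g} ∧
  ∀ w' ∈ lexSeg d u v,
    (monomial m (1 : k) : MvPolynomial (Fin n) k) ∈
        monomialIdeal k {z ∈ lexSeg d u v | prec z w' ∨ z = w'} →
      g = w' ∨ prec g w'

/-- Reversing the variables: the `toLex` order on `revMon` exponent vectors is the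
lexicographic order induced by `x_n > x_{n-1} > ⋯ > x_1`. -/
def revMon {n : ℕ} (m : Mon n) : Mon n := Finsupp.equivMapDomain Fin.revPerm m

/-- The depth of `S/I` with respect to the graded maximal ideal `(x_1, …, x_n)`:
the maximal length of an `S/I`-regular sequence of elements of `(x_1, …, x_n)`. -/
noncomputable def ringDepth {n : ℕ} {k : Type*} [Field k]
    (I : Ideal (MvPolynomial (Fin n) k)) : ℕ :=
  sSup {r : ℕ | ∃ rs : List (MvPolynomial (Fin n) k), rs.length = r ∧
    (∀ x ∈ rs, x ∈ Ideal.span (Set.range (X : Fin n → MvPolynomial (Fin n) k))) ∧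
    RingTheory.Sequence.IsRegular (MvPolynomial (Fin n) k ⧸ I) rs}

/-!
Among monomials of degree `d`, the upper bound `w ≤ x_2^d` says exactly that `x_1 ∤ w`, and the
lower bound `w ≥ x_l x_n^{d-1}` says exactly that one of `x_2, …, x_l` divides `w` (the
lex-smallest monomial of degree `d - 1` is `x_n^{d-1}`). Since `h` involves `x_1` exactly once and
none of `x_2, …, x_l`, a generator of `J` divides `m h` iff some `x_j` with `2 ≤ j ≤ l` divides
`m`, the witness being `x_j h / x_1`.
-/

section Colon
variable {σ R : Type*} [CommSemiring R]

theorem MvPolynomial.support_mul_monomial_one (p : MvPolynomial σ R) (h : σ →₀ ℕ) :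
    (p * monomial h 1).support = p.support.map (addRightEmbedding h) :=
  AddMonoidAlgebra.support_coeff_mul_single p _ (by simp) _

theorem MvPolynomial.mem_colon_span_monomial_iff {T : Set (σ →₀ ℕ)} {h : σ →₀ ℕ}
    {f : MvPolynomial σ R} :
    f ∈ (Ideal.span ((fun s => monomial s (1 : R)) '' T)).colon
        (Ideal.span {(monomial h 1 : MvPolynomial σ R)}) ↔
      ∀ m ∈ f.support, ∃ t ∈ T, t ≤ m + h := by
  rw [Ideal.mem_colon_span_singleton, mem_ideal_span_monomial_image, support_mul_monomial_one,
    Finset.forall_mem_map]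
  rfl

end Colon

namespace Finsupp

theorem apply_add_apply_le_degree {α : Type*} {w : α →₀ ℕ} {a b : α} (hab : a ≠ b) :
    w a + w b ≤ w.degree :=
  calc w a + w b = (single a (w a) + single b (w b)).degree := by simp
    _ ≤ w.degree := degree_mono fun q => by
      rcases eq_or_ne q a with rfl | hqa
      · simp [hab]
      · rcases eq_or_ne q b with rfl | hqb <;> simp [*, Ne.symm]

variable {α : Type*} [LinearOrder α]

theorem toLex_lt_of_forall_le_eq_zero {z w : α →₀ ℕ} {j : α} (hz : ∀ q ≤ j, z q = 0)
    (hw : w j ≠ 0) : toLex z < toLex w :=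
  calc toLex z < toLex (single j 1) :=
        Lex.lt_iff.2 ⟨j, fun q hq => by simp [hz q hq.le, hq.ne'], by simp [hz j le_rfl]⟩
    _ ≤ toLex w := toLex_monotone (single_le_iff.2 (Nat.pos_of_ne_zero hw))

theorem toLex_le_toLex_single_degree_iff {w : α →₀ ℕ} {a : α} :
    toLex w ≤ toLex (single a w.degree) ↔ ∀ p < a, w p = 0 := by
  refine ⟨fun hle p hpa => by_contra fun hwp => hle.not_gt ?_, fun hz => not_lt.1 fun hlt => ?_⟩
  · exact toLex_lt_of_forall_le_eq_zero (fun q hq => single_eq_of_ne (hq.trans_lt hpa).ne) hwp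
  · obtain ⟨p, hpeq, hplt⟩ := Lex.lt_iff.1 hlt
    simp only [ofLex_toLex] at hpeq hplt
    rcases lt_trichotomy p a with hpa | rfl | hap
    · simp [hz p hpa, single_eq_of_ne hpa.ne] at hplt
    · exact (le_degree p w).not_gt (by simpa using hplt)
    · have hwa : w a = w.degree := by simpa using (hpeq a hap).symm
      have := apply_add_apply_le_degree (w := w) hap.ne
      simp [single_eq_of_ne hap.ne'] at hplt
      omega

theorem toLex_single_degree_le {w : α →₀ ℕ} {t : α} (ht : ∀ p, p ≤ t) :
    toLex (single t w.degree) ≤ toLex w := by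
  refine not_lt.1 fun hlt => ?_
  obtain ⟨p, hpeq, hplt⟩ := Lex.lt_iff.1 hlt
  simp only [ofLex_toLex] at hpeq hplt
  obtain rfl : p = t := by_contra fun hpt => by simp [single_eq_of_ne hpt] at hplt
  have hw : w.degree = w p := by
    rw [degree_apply, Finset.sum_eq_single p]
    · exact fun q _ hqp => by simpa [single_eq_of_ne hqp] using hpeq q ((ht q).lt_of_ne hqp)
    · simp
  simp [hw] at hplt

theorem toLex_single_add_single_degree_le_iff {w : α →₀ ℕ} {i t : α} (hit : i < t)
    (ht : ∀ p, p ≤ t) :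
    toLex (single i 1 + single t (w.degree - 1)) ≤ toLex w ↔ ∃ j ≤ i, w j ≠ 0 := by
  constructor
  · refine fun hle => by_contra fun hw =>
      hle.not_gt (toLex_lt_of_forall_le_eq_zero (j := i) ?_ ?_)
    · simpa using hw
    · simp
  rintro ⟨j, hji, hwj⟩
  rcases hji.lt_or_eq with hji | rfl
  · refine (toLex_lt_of_forall_le_eq_zero (fun q hq => ?_) hwj).le
    simp [single_eq_of_ne (hq.trans_lt hji).ne, single_eq_of_ne (hq.trans_lt (hji.trans hit)).ne]
  · obtain ⟨w', rfl⟩ : ∃ w', w = single j 1 + w' :=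
      ⟨w - single j 1, (add_tsub_cancel_of_le (single_le_iff.2 (Nat.pos_of_ne_zero hwj))).symm⟩
    have hw' : (single j 1 + w').degree - 1 = w'.degree := by simp
    rw [hw', toLex_add, toLex_add]
    exact add_le_add_right (toLex_single_degree_le (w := w') ht) _

end Finsupp

theorem monDeg_eq_degree {n : ℕ} (m : Mon n) : monDeg m = m.degree :=
  (Finsupp.degree_eq_sum m).symm

theorem mem_lexSeg_single_iff {n d : ℕ} {a i t : Fin n} (hit : i < t) (ht : ∀ p, p ≤ t)
    {w : Mon n} :
    w ∈ lexSeg d (Finsupp.single a d) (Finsupp.single i 1 + Finsupp.single t (d - 1)) ↔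
      monDeg w = d ∧ (∀ p < a, w p = 0) ∧ ∃ j ≤ i, w j ≠ 0 := by
  rw [lexSeg, Set.mem_ofPred_eq, monDeg_eq_degree]
  constructor
  · rintro ⟨rfl, hv, hu⟩
    exact ⟨rfl, Finsupp.toLex_le_toLex_single_degree_iff.1 hu,
      (Finsupp.toLex_single_add_single_degree_le_iff hit ht).1 hv⟩
  · rintro ⟨rfl, hu, hv⟩
    exact ⟨rfl, (Finsupp.toLex_single_add_single_degree_le_iff hit ht).2 hv,
      Finsupp.toLex_le_toLex_single_degree_iff.2 hu⟩

theorem exists_le_add_iff_exists_ne_zero {n : ℕ} [NeZero n] {i : Fin n} {h : Mon n}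
    (hh0 : h 0 = 1) (hmid : ∀ j, 0 < j → j ≤ i → h j = 0) (m : Mon n) :
    (∃ w, (monDeg w = monDeg h ∧ w 0 = 0 ∧ ∃ j ≤ i, w j ≠ 0) ∧ w ≤ m + h) ↔
      ∃ j, (0 < j ∧ j ≤ i) ∧ m j ≠ 0 := by
  constructor
  · rintro ⟨w, ⟨-, hw0, j, hji, hwj⟩, hle⟩
    have hj0 : 0 < j := Fin.pos_iff_ne_zero.2 fun hj => hwj (hj ▸ hw0)
    have := hle j
    simp only [Finsupp.add_apply, hmid j hj0 hji] at this
    exact ⟨j, ⟨hj0, hji⟩, by omega⟩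
  · rintro ⟨j, ⟨hj0, hji⟩, hmj⟩
    have hh : Finsupp.single 0 1 + h.erase 0 = h := hh0 ▸ Finsupp.single_add_erase 0 h
    refine ⟨Finsupp.single j 1 + h.erase 0, ⟨?_, ?_, j, hji, by simp⟩, fun q => ?_⟩
    · conv_rhs => rw [← hh]
      simp [monDeg_eq_degree]
    · simp [Finsupp.single_eq_of_ne hj0.ne]
    · rcases eq_or_ne q j with rfl | hqj
      · simp [Finsupp.erase_ne hj0.ne', hmid q hj0 hji]
        omega
      · simp only [Finsupp.add_apply, Finsupp.single_eq_of_ne hqj, Finsupp.erase_apply]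
        split_ifs <;> omega

/-- Let `J` be the ideal generated by the monomials `w` of degree `d` with
`x_2^d ≥_lex w ≥_lex x_l x_n^{d-1}`.  Then for every monomial `h` of degree `d` of the form
`h = x_1 x_{l+1}^{α_{l+1}} ⋯ x_n^{α_n}`, the colon ideal `J : h` equals `(x_2, …, x_l)`. -/
theorem colon_J_eq_x2_to_xl {n : ℕ} [NeZero n] (hn : 2 ≤ n) (k : Type*) [Field k]
    (d : ℕ) (l : ℕ) (hln : l ≤ n - 1)
    (h : Mon n) (hhd : monDeg h = d) (hh0 : h 0 = 1)
    (hhMid : ∀ i : Fin n, 1 ≤ i.val → i.val ≤ l - 1 → h i = 0) :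
    Submodule.colon
        (monomialIdeal k {w : Mon n | monDeg w = d ∧
          toLex (Finsupp.single (⟨l - 1, by omega⟩ : Fin n) 1 +
            Finsupp.single (⟨n - 1, by omega⟩ : Fin n) (d - 1)) ≤ toLex w ∧
          toLex w ≤ toLex (Finsupp.single (⟨1, by omega⟩ : Fin n) d)})
        (Ideal.span {(monomial h (1 : k) : MvPolynomial (Fin n) k)}) =
      Ideal.span ((fun i => (X i : MvPolynomial (Fin n) k)) ''
        {i : Fin n | 1 ≤ i.val ∧ i.val ≤ l - 1}) := by
  set i : Fin n := ⟨l - 1, by omega⟩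
  set t : Fin n := ⟨n - 1, by omega⟩
  have hit : i < t := Fin.lt_def.2 (by simp [i, t]; omega)
  have ht : ∀ p, p ≤ t := fun p => Fin.le_def.2 (by simp [t]; omega)
  have hlt_one : ∀ p : Fin n, p < ⟨1, by omega⟩ ↔ p = 0 := fun p => by
    simp only [Fin.lt_def, Fin.ext_iff, Fin.val_zero]; omega
  ext f
  rw [monomialIdeal, MvPolynomial.mem_colon_span_monomial_iff, mem_ideal_span_X_image]
  refine forall₂_congr fun m _ => ?_
  change (∃ w ∈ lexSeg d (Finsupp.single ⟨1, by omega⟩ d)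
    (Finsupp.single i 1 + Finsupp.single t (d - 1)), w ≤ m + h) ↔ _
  simp only [mem_lexSeg_single_iff hit ht, hlt_one, forall_eq, ← hhd]
  exact exists_le_add_iff_exists_ne_zero (i := i) hh0 hhMid m
end

section
/- Let u = x_1^{a_1}···x_n^{a_n} be a monomial of degree d and let L^f(u) = {w monomial of degree d : w ≤_lex u} be the final lexsegment defined by u. Then the ideal I = (L^f(u)) has linear quotients with respect to the ordering of L^f(u) in decreasing order relative to the lexicographic order induced by x_n > x_{n-1} > … > x_1. -/
open MvPolynomial

/-! Ordering by `revMon` in the lexicographic order is the colexicographic order. If `z` precedes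
`w`, let `j` be the largest index with `ν_j(z) ≠ ν_j(w)`; then `ν_j(z) > ν_j(w)`, and since both
have degree `d`, `w` is divisible by some `x_i` with `i < j`. The exchanged monomial
`z' = x_j w / x_i` is lex-smaller than `w` (so still in the final segment), precedes `w`, and
divides `x_j w`. Hence each generator `z / gcd(z, w)` of the colon ideal is a multiple of such a
variable `x_j`, which itself lies in the colon ideal. -/

lemma revMon_apply {n : ℕ} (m : Mon n) (i : Fin n) : revMon m i = m i.rev := by
  simp [revMon, Finsupp.equivMapDomain_apply]

lemma toLex_revMon_lt_iff {n : ℕ} {w z : Mon n} :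
    toLex (revMon w) < toLex (revMon z) ↔ toColex w < toColex z := by
  rw [Finsupp.Lex.lt_iff, Finsupp.Colex.lt_iff]
  simp only [ofLex_toLex, ofColex_toColex, revMon_apply]
  constructor
  · rintro ⟨i, heq, hlt⟩
    exact ⟨i.rev, fun t ht => by simpa using heq t.rev (Fin.rev_lt_iff.mp ht), hlt⟩
  · rintro ⟨j, heq, hlt⟩
    exact ⟨j.rev, fun t ht => heq t.rev (Fin.lt_rev_iff.mp ht), by simpa using hlt⟩

lemma monDeg_add {n : ℕ} (a b : Mon n) : monDeg (a + b) = monDeg a + monDeg b := by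
  simp [monDeg, Finset.sum_add_distrib]

lemma monDeg_single {n : ℕ} (i : Fin n) (e : ℕ) : monDeg (Finsupp.single i e : Mon n) = e := by
  simp [monDeg, Finsupp.single_apply]

lemma monomial_mem_monomialIdeal_iff {n : ℕ} {k : Type*} [Field k] {T : Set (Mon n)}
    {m : Mon n} :
    (monomial m (1 : k) : MvPolynomial (Fin n) k) ∈ monomialIdeal k T ↔ ∃ t ∈ T, t ≤ m := by
  classical
  rw [monomialIdeal, mem_ideal_span_monomial_image]
  simp [support_monomial]

theorem colon_monomialIdeal_eq_span_X {n : ℕ} (k : Type*) [Field k] {E : Set (Mon n)}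
    {w : Mon n}
    (hE : ∀ z ∈ E, ∃ s, w s < z s ∧ ∃ z' ∈ E, z' ≤ w + Finsupp.single s 1) :
    Submodule.colon (monomialIdeal k E)
        (Ideal.span {(monomial w (1 : k) : MvPolynomial (Fin n) k)}) =
      Ideal.span ((fun i => (X i : MvPolynomial (Fin n) k)) ''
        {s | ∃ z' ∈ E, z' ≤ w + Finsupp.single s 1}) := by
  refine le_antisymm (fun p hp => ?_) (Ideal.span_le.mpr ?_)
  · rw [Ideal.mem_colon_span_singleton, monomialIdeal, mem_ideal_span_monomial_image] at hp
    refine mem_ideal_span_X_image.mpr fun m hm => ?_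
    have hmw : m + w ∈ (p * monomial w (1 : k)).support := by
      simpa [coeff_mul_monomial] using hm
    obtain ⟨z, hzE, hzle⟩ := hp _ hmw
    obtain ⟨s, hws, hs⟩ := hE z hzE
    have hms : w s < m s + w s := (hws.trans_le (hzle s)).trans_eq (Finsupp.add_apply ..)
    exact ⟨s, hs, by omega⟩
  · rintro _ ⟨s, hs, rfl⟩
    rw [SetLike.mem_coe, Ideal.mem_colon_span_singleton]
    beta_reduce
    rw [X, monomial_mul, one_mul, add_comm, monomial_mem_monomialIdeal_iff]
    exact hs

lemma exists_lt_ne_zero_of_monDeg_le {n : ℕ} {w z : Mon n} (hdeg : monDeg z ≤ monDeg w)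
    {j : Fin n} (heq : ∀ t, j < t → w t = z t) (hlt : w j < z j) : ∃ i < j, w i ≠ 0 := by
  by_contra! h
  have : monDeg w < monDeg z := by
    refine Finset.sum_lt_sum (fun t _ => ?_) ⟨j, Finset.mem_univ j, hlt⟩
    rcases lt_trichotomy t j with ht | rfl | ht
    · simp [h t ht]
    · exact hlt.le
    · exact (heq t ht).le
  omega

theorem exists_exchange_of_colex_lt {n : ℕ} {w z : Mon n} (hdeg : monDeg w = monDeg z)
    (hwz : toColex w < toColex z) :
    ∃ j, w j < z j ∧ ∃ z' : Mon n, monDeg z' = monDeg w ∧ toLex z' < toLex w ∧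
      toColex w < toColex z' ∧ z' ≤ w + Finsupp.single j 1 := by
  obtain ⟨j, heq, hlt⟩ := Finsupp.Colex.lt_iff.mp hwz
  obtain ⟨i, hij, hwi⟩ := exists_lt_ne_zero_of_monDeg_le hdeg.ge heq hlt
  obtain ⟨w₀, rfl⟩ : ∃ w₀, w = w₀ + Finsupp.single i 1 :=
    ⟨w - Finsupp.single i 1, (tsub_add_cancel_of_le (Finsupp.single_le_iff.mpr
      (Nat.one_le_iff_ne_zero.mpr hwi))).symm⟩
  refine ⟨j, hlt, w₀ + Finsupp.single j 1, ?_, ?_, ?_, ?_⟩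
  · simp [monDeg_add, monDeg_single]
  · simpa using add_lt_add_left (Finsupp.Lex.single_lt_iff.mpr hij) (toLex w₀)
  · simpa using add_lt_add_left (Finsupp.Colex.single_lt_iff.mpr hij) (toColex w₀)
  · exact add_le_add_left le_self_add _

theorem final_lexsegment_linear_quotients_general {n : ℕ}
    (k : Type*) [Field k] (d : ℕ) (u : Mon n) :
    hasLinearQuotientsWrt k {w : Mon n | monDeg w = d ∧ toLex w ≤ toLex u}
      (fun z w => toLex (revMon w) < toLex (revMon z)) := by
  intro w ⟨hwd, hwu⟩
  refine ⟨_, colon_monomialIdeal_eq_span_X k ?_⟩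
  rintro z ⟨⟨hzd, -⟩, hwz⟩
  obtain ⟨j, hj, z', hz'd, hz'w, hwz', hz'le⟩ :=
    exists_exchange_of_colex_lt (hwd.trans hzd.symm) (toLex_revMon_lt_iff.mp hwz)
  exact ⟨j, hj, z', ⟨⟨hz'd.trans hwd, hz'w.le.trans hwu⟩, toLex_revMon_lt_iff.mpr hwz'⟩, hz'le⟩

/-- The ideal generated by a final lexsegment `L^f(u) = {w : w ≤_lex u}` has linear quotients
with respect to the decreasing ordering relative to the lexicographic order induced by
`x_n > x_{n-1} > ⋯ > x_1`. -/
theorem final_lexsegment_linear_quotients {n : ℕ} [NeZero n] (hn : 2 ≤ n)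
    (k : Type*) [Field k] (d : ℕ) (hd : 2 ≤ d) (u : Mon n) (hu : monDeg u = d) :
    hasLinearQuotientsWrt k {w : Mon n | monDeg w = d ∧ toLex w ≤ toLex u}
      (fun z w => toLex (revMon w) < toLex (revMon z)) :=
  final_lexsegment_linear_quotients_general k d u
end
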